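/- Let U: ℝ × ℝ² → ℝ be continuous with |U(t,x)| ≤ C(1 + |x|^α) for some C > 0 and α ∈ (0,2). Then there exists K' > 0 such that for all x ∈ 𝒳, A_T(x) ≥ ∫₀ᵀ (|ẋ(t)|²/4 + |x(t)|²/(8K)) dt − (K' + C)T, where K = 2T² is the Poincaré constant; in particular A_T is coercive on 𝒳. -/

import Mathlib

open MeasureTheory Set

/-- `x : [0,T] → ℝ²` (modeled as `ℂ`) is `H¹` with (weak) derivative `x'`. -/
def IsH1 (T : ℝ) (x x' : ℝ → ℂ) : Prop :=
  Continuous x ∧ IntervalIntegrable x' volume 0 T ∧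
  IntervalIntegrable (fun t => ‖x' t‖ ^ 2) volume 0 T ∧
  ∀ t ∈ Set.Icc (0 : ℝ) T, x t = x 0 + ∫ s in (0 : ℝ)..t, x' s

/-- `x` has nonzero winding number around the origin on `[0,T]`. -/
def Winds (T : ℝ) (x : ℝ → ℂ) : Prop :=
  ∃ θ : ℝ → ℝ, ContinuousOn θ (Set.Icc 0 T) ∧
    (∀ t ∈ Set.Icc (0 : ℝ) T,
      x t = (‖x t‖ : ℂ) * Complex.exp ((θ t : ℂ) * Complex.I)) ∧
    ∃ k : ℤ, k ≠ 0 ∧ θ T - θ 0 = 2 * Real.pi * (k : ℝ)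

/-- `x ∈ 𝒳 = 𝒳_c ∪ 𝒳_r`. -/
def MemX (T : ℝ) (x : ℝ → ℂ) : Prop :=
  (∃ t₀ ∈ Set.Icc (0 : ℝ) T, x t₀ = 0) ∨
    ((∀ t ∈ Set.Icc (0 : ℝ) T, x t ≠ 0) ∧ Winds T x)

/-!
Every loop in `𝒳` meets the origin or winds around it, so the origin lies on a chord
`[x a, x b]`, i.e. `‖x a‖ + ‖x b‖ ≤ ‖x a - x b‖`. A loop of length `L = ∫₀ᵀ |ẋ|` has diameter
at most `L / 2`, hence `|x| ≤ L` on `[0,T]`, and Cauchy–Schwarz gives the Poincaré inequality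
`∫₀ᵀ |x|² ≤ T L² ≤ T² ∫₀ᵀ |ẋ|²`. Since `α < 2`, Young's inequality absorbs `C |x|^α` into
`|x|² / (32 T²) + M`, and the Poincaré inequality turns the resulting lower bound
`∫₀ᵀ (|ẋ|²/2 - |x|²/(32 T²)) - (C + M) T` for the action into the claimed one with `K' = M + 1`.
-/

lemma rpow_le_rpow_sub_two_mul_sq_add_rpow {α R s : ℝ} (hα0 : 0 ≤ α) (hα2 : α ≤ 2)
    (hR : 0 < R) (hs : 0 ≤ s) : s ^ α ≤ R ^ (α - 2) * s ^ 2 + R ^ α := by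
  rcases le_or_gt s R with hsR | hRs
  · have hsα := Real.rpow_le_rpow hs hsR hα0
    have hsq : 0 ≤ R ^ (α - 2) * s ^ 2 := by positivity
    linarith
  · have hs0 : 0 < s := hR.trans hRs
    calc s ^ α = s ^ (α - 2) * s ^ 2 := by
          rw [← Real.rpow_natCast s 2, ← Real.rpow_add hs0]
          norm_num
      _ ≤ R ^ (α - 2) * s ^ 2 := by
          have : s ^ (α - 2) ≤ R ^ (α - 2) := Real.rpow_le_rpow_of_nonpos hR hRs.le (by linarith)
          exact mul_le_mul_of_nonneg_right this (sq_nonneg s)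
      _ ≤ R ^ (α - 2) * s ^ 2 + R ^ α := le_add_of_nonneg_right (Real.rpow_nonneg hR.le α)

lemma exists_mul_rpow_le_mul_sq_add {c α δ : ℝ} (hc : 0 ≤ c) (hα0 : 0 ≤ α) (hα2 : α < 2)
    (hδ : 0 < δ) : ∃ M ≥ 0, ∀ s ≥ 0, c * s ^ α ≤ δ * s ^ 2 + M := by
  have hlim : Filter.Tendsto (fun R : ℝ => c * R ^ (α - 2)) Filter.atTop (nhds 0) := by
    simpa [neg_sub] using (tendsto_rpow_neg_atTop (sub_pos.2 hα2)).const_mul c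
  obtain ⟨R, hR, hcR⟩ :=
    ((Filter.eventually_gt_atTop 0).and (hlim.eventually (gt_mem_nhds hδ))).exists
  refine ⟨c * R ^ α, by positivity, fun s hs => ?_⟩
  calc c * s ^ α ≤ c * (R ^ (α - 2) * s ^ 2 + R ^ α) :=
        mul_le_mul_of_nonneg_left (rpow_le_rpow_sub_two_mul_sq_add_rpow hα0 hα2.le hR hs) hc
    _ = c * R ^ (α - 2) * s ^ 2 + c * R ^ α := by ring
    _ ≤ δ * s ^ 2 + c * R ^ α := by gcongr

lemma sq_integral_le_mul_integral_sq {f : ℝ → ℝ} {a b : ℝ} (hab : a ≤ b)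
    (hf : IntervalIntegrable f volume a b)
    (hf2 : IntervalIntegrable (fun t => f t ^ 2) volume a b) :
    (∫ t in a..b, f t) ^ 2 ≤ (b - a) * ∫ t in a..b, f t ^ 2 := by
  rcases hab.eq_or_lt with rfl | hlt
  · simp
  set L := ∫ t in a..b, f t
  set E := ∫ t in a..b, f t ^ 2
  -- `∫ ((b - a) f - L)²` is `(b - a)³` times the variance of `f`.
  have hvar : ∫ t in a..b, ((b - a) * f t - L) ^ 2 = (b - a) * ((b - a) * E - L ^ 2) := by
    have hexp : (fun t => ((b - a) * f t - L) ^ 2)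
        = fun t => (b - a) ^ 2 * f t ^ 2 - 2 * (b - a) * L * f t + L ^ 2 := by
      ext t; ring
    rw [hexp, intervalIntegral.integral_add ((hf2.const_mul _).sub (hf.const_mul _))
        intervalIntegrable_const,
      intervalIntegral.integral_sub (hf2.const_mul _) (hf.const_mul _),
      intervalIntegral.integral_const_mul, intervalIntegral.integral_const_mul,
      intervalIntegral.integral_const, smul_eq_mul]
    ring
  have hnonneg := intervalIntegral.integral_nonneg (μ := volume) hab
    fun t _ => sq_nonneg ((b - a) * f t - L)
  rw [hvar] at hnonneg
  linarith [(mul_nonneg_iff_of_pos_left (sub_pos.2 hlt)).1 hnonneg]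

lemma exists_abs_sub_eq_of_le_abs_sub {f : ℝ → ℝ} {a b c : ℝ} (hab : a ≤ b)
    (hf : ContinuousOn f (Icc a b)) (hc : 0 ≤ c) (h : c ≤ |f b - f a|) :
    ∃ t ∈ Icc a b, |f t - f a| = c :=
  intermediate_value_Icc hab (hf.sub continuousOn_const).abs ⟨by simpa using hc, h⟩

lemma Winds.exists_norm_add_norm_eq {T : ℝ} {x : ℝ → ℂ} (hT : 0 ≤ T) (hw : Winds T x) :
    ∃ t ∈ Icc 0 T, ‖x 0‖ + ‖x t‖ = ‖x 0 - x t‖ := by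
  obtain ⟨θ, hθ, hpolar, k, hk, hθk⟩ := hw
  have hπ : Real.pi ≤ |θ T - θ 0| := by
    have hk1 : (1 : ℝ) ≤ |(k : ℝ)| := by exact_mod_cast Int.one_le_abs hk
    rw [hθk, abs_mul, abs_of_pos Real.two_pi_pos]
    nlinarith [Real.pi_pos]
  obtain ⟨t, ht, hθt⟩ := exists_abs_sub_eq_of_le_abs_sub hT hθ Real.pi_pos.le hπ
  have hanti : Complex.exp (θ t * Complex.I) = -Complex.exp (θ 0 * Complex.I) := by
    rcases (abs_eq Real.pi_pos.le).1 hθt with h | h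
    · rw [show θ t = θ 0 + Real.pi by linarith]
      push_cast
      rw [add_mul, Complex.exp_add_pi_mul_I]
    · rw [show θ t = θ 0 - Real.pi by linarith]
      push_cast
      rw [sub_mul, Complex.exp_sub_pi_mul_I]
  have hdiff :
      x 0 - x t = ((‖x 0‖ + ‖x t‖ : ℝ) : ℂ) * Complex.exp (θ 0 * Complex.I) := by
    conv_lhs => rw [hpolar 0 ⟨le_rfl, hT⟩, hpolar t ht, hanti]
    push_cast
    ring
  refine ⟨t, ht, ?_⟩
  rw [hdiff, norm_mul, Complex.norm_exp_ofReal_mul_I, mul_one, Complex.norm_real,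
    Real.norm_of_nonneg (by positivity)]

lemma MemX.exists_norm_add_norm_le {T : ℝ} {x : ℝ → ℂ} (hT : 0 ≤ T) (hmem : MemX T x) :
    ∃ a ∈ Icc 0 T, ∃ b ∈ Icc 0 T, ‖x a‖ + ‖x b‖ ≤ ‖x a - x b‖ := by
  rcases hmem with ⟨t₀, ht₀, hx₀⟩ | ⟨-, hw⟩
  · exact ⟨t₀, ht₀, t₀, ht₀, by simp [hx₀]⟩
  · obtain ⟨t, ht, h⟩ := hw.exists_norm_add_norm_eq hT
    exact ⟨0, ⟨le_rfl, hT⟩, t, ht, h.le⟩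

namespace IsH1

variable {T : ℝ} {x x' : ℝ → ℂ}

lemma norm_sub_le (hx : IsH1 T x x') {s t : ℝ} (hs : s ∈ Icc 0 T) (ht : t ∈ Icc 0 T)
    (hst : s ≤ t) :
    ‖x t - x s‖ ≤ (∫ u in (0 : ℝ)..t, ‖x' u‖) - ∫ u in (0 : ℝ)..s, ‖x' u‖ := by
  obtain ⟨-, hint, -, hrep⟩ := hx
  have hsub : ∀ r ∈ Icc 0 T, IntervalIntegrable x' volume 0 r := fun r hr =>
    hint.mono_set (uIcc_subset_uIcc_left (Icc_subset_uIcc hr))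
  rw [hrep t ht, hrep s hs, add_sub_add_left_eq_sub,
    intervalIntegral.integral_interval_sub_left (hsub t ht) (hsub s hs),
    intervalIntegral.integral_interval_sub_left (hsub t ht).norm (hsub s hs).norm]
  exact intervalIntegral.norm_integral_le_integral_norm hst

lemma norm_sub_le_half_of_loop (hx : IsH1 T x x') (hper : x 0 = x T) {s t : ℝ}
    (hs : s ∈ Icc 0 T) (ht : t ∈ Icc 0 T) :
    ‖x t - x s‖ ≤ (∫ u in (0 : ℝ)..T, ‖x' u‖) / 2 := by
  wlog hst : s ≤ t generalizing s t
  · rw [norm_sub_rev]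
    exact this ht hs (le_of_not_ge hst)
  have h0 : (0 : ℝ) ∈ Icc 0 T := ⟨le_rfl, hs.1.trans hs.2⟩
  have hT : T ∈ Icc 0 T := ⟨hs.1.trans hs.2, le_rfl⟩
  have hst' := hx.norm_sub_le hs ht hst
  have h0s := hx.norm_sub_le h0 hs hs.1
  have htT := hx.norm_sub_le ht hT ht.2
  -- The other arc from `t` back to `s` passes through `x T = x 0`.
  have harc : ‖x t - x s‖ ≤ ‖x s - x 0‖ + ‖x T - x t‖ := by
    rw [norm_sub_rev, ← hper]
    calc ‖x s - x t‖ = ‖(x s - x 0) + (x 0 - x t)‖ := by ring_nf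
      _ ≤ _ := norm_add_le _ _
  simp only [intervalIntegral.integral_same, sub_zero] at h0s
  linarith

lemma norm_le_integral_norm_of_memX (hx : IsH1 T x x') (hper : x 0 = x T)
    (hmem : MemX T x) {t : ℝ} (ht : t ∈ Icc 0 T) :
    ‖x t‖ ≤ ∫ u in (0 : ℝ)..T, ‖x' u‖ := by
  obtain ⟨a, ha, b, hb, hab⟩ := hmem.exists_norm_add_norm_le (ht.1.trans ht.2)
  have hchord := hx.norm_sub_le_half_of_loop hper hb ha
  have hta := hx.norm_sub_le_half_of_loop hper ha ht
  linarith [norm_le_norm_add_norm_sub' (x t) (x a), norm_nonneg (x b)]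

lemma integral_norm_sq_le_of_memX (hT : 0 ≤ T) (hx : IsH1 T x x') (hper : x 0 = x T)
    (hmem : MemX T x) :
    ∫ t in (0 : ℝ)..T, ‖x t‖ ^ 2 ≤ T ^ 2 * ∫ t in (0 : ℝ)..T, ‖x' t‖ ^ 2 := by
  set L := ∫ u in (0 : ℝ)..T, ‖x' u‖
  have hcs : L ^ 2 ≤ T * ∫ t in (0 : ℝ)..T, ‖x' t‖ ^ 2 := by
    simpa using sq_integral_le_mul_integral_sq hT hx.2.1.norm hx.2.2.1
  calc ∫ t in (0 : ℝ)..T, ‖x t‖ ^ 2 ≤ ∫ _ in (0 : ℝ)..T, L ^ 2 :=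
        intervalIntegral.integral_mono_on hT ((hx.1.norm.pow 2).intervalIntegrable 0 T)
          intervalIntegrable_const fun t ht =>
            pow_le_pow_left₀ (norm_nonneg _) (hx.norm_le_integral_norm_of_memX hper hmem ht) 2
    _ = T * L ^ 2 := by simp
    _ ≤ T * (T * ∫ t in (0 : ℝ)..T, ‖x' t‖ ^ 2) := mul_le_mul_of_nonneg_left hcs hT
    _ = T ^ 2 * ∫ t in (0 : ℝ)..T, ‖x' t‖ ^ 2 := by ring

end IsH1

/-- **coercivity estimate.** If `U` is continuous with
`|U(t,x)| ≤ C(1+|x|^α)`, `α ∈ (0,2)`, then there is `K' > 0` such that for every `x ∈ 𝒳`,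
`A_T(x) ≥ ∫₀ᵀ (|ẋ|²/4 + |x|²/(8K)) dt − (K'+C)T`, where `K = 2T²`. -/
theorem action_coercive (T C α : ℝ) (hT : 0 < T) (hC : 0 < C)
    (hα : α ∈ Set.Ioo (0 : ℝ) 2)
    (U : ℝ → ℂ → ℝ) (hU : Continuous fun p : ℝ × ℂ => U p.1 p.2)
    (hgrowth : ∀ t z, |U t z| ≤ C * (1 + ‖z‖ ^ α)) :
    ∃ K' > 0, ∀ x x' : ℝ → ℂ, IsH1 T x x' → x 0 = x T → MemX T x →
      IntervalIntegrable (fun t => 1 / ‖x t‖) volume 0 T →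
      (∫ t in (0 : ℝ)..T, ((‖x' t‖ ^ 2) / 4 + (‖x t‖ ^ 2) / (8 * (2 * T ^ 2))))
          - (K' + C) * T
        ≤ ∫ t in (0 : ℝ)..T, ((1 / 2) * ‖x' t‖ ^ 2 + 1 / ‖x t‖ + U t (x t)) := by
  obtain ⟨M, hM, hyoung⟩ := exists_mul_rpow_le_mul_sq_add hC.le hα.1.le hα.2
    (by positivity : (0 : ℝ) < 1 / (32 * T ^ 2))
  refine ⟨M + 1, by positivity, fun x x' hx hper hmem hinv => ?_⟩
  have hkin := hx.2.2.1
  have hpot : IntervalIntegrable (fun t => ‖x t‖ ^ 2) volume 0 T :=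
    (hx.1.norm.pow 2).intervalIntegrable 0 T
  have hlower : ∫ t in (0 : ℝ)..T, (‖x' t‖ ^ 2 / 2 - ‖x t‖ ^ 2 / (32 * T ^ 2) - (C + M))
      ≤ ∫ t in (0 : ℝ)..T, ((1 / 2) * ‖x' t‖ ^ 2 + 1 / ‖x t‖ + U t (x t)) := by
    refine intervalIntegral.integral_mono_on hT.le
      (((hkin.div_const _).sub (hpot.div_const _)).sub intervalIntegrable_const)
      (((hkin.const_mul _).add hinv).add
        ((hU.comp (continuous_id.prodMk hx.1)).intervalIntegrable 0 T)) fun t _ => ?_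
    have hU_ge := (abs_le.1 (hgrowth t (x t))).1
    have hU_young := hyoung ‖x t‖ (norm_nonneg _)
    have hcoulomb : 0 ≤ 1 / ‖x t‖ := by positivity
    linarith [show 1 / (32 * T ^ 2) * ‖x t‖ ^ 2 = ‖x t‖ ^ 2 / (32 * T ^ 2) by ring]
  rw [intervalIntegral.integral_sub ((hkin.div_const _).sub (hpot.div_const _))
      intervalIntegrable_const,
    intervalIntegral.integral_sub (hkin.div_const _) (hpot.div_const _),
    intervalIntegral.integral_div, intervalIntegral.integral_div,
    intervalIntegral.integral_const, smul_eq_mul, sub_zero] at hlower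
  rw [intervalIntegral.integral_add (hkin.div_const _) (hpot.div_const _),
    intervalIntegral.integral_div, intervalIntegral.integral_div]
  set E := ∫ t in (0 : ℝ)..T, ‖x' t‖ ^ 2
  set P := ∫ t in (0 : ℝ)..T, ‖x t‖ ^ 2
  have hE : 0 ≤ E := intervalIntegral.integral_nonneg hT.le fun t _ => sq_nonneg ‖x' t‖
  have hpoinc : P / T ^ 2 ≤ E := div_le_of_le_mul₀ (by positivity) hE
    (by linarith [hx.integral_norm_sq_le_of_memX hT.le hper hmem])
  linarith [show P / (8 * (2 * T ^ 2)) = P / T ^ 2 / 16 by ring,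
    show P / (32 * T ^ 2) = P / T ^ 2 / 32 by ring]
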